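/- arXiv:1801.08243 — 2 statements merged into one kernel-verified Lean document; each statement's English description precedes it below -/
import Mathlib

section
/- For all finite simple graphs G and H, the strict vector chromatic number of their categorical product satisfies χ_sv(G × H) = min{χ_sv(G), χ_sv(H)}. -/
open Matrix Kronecker

noncomputable section VectorColoring

variable {V α β : Type*}

/-- A vector `t`-coloring of a graph `G`: vectors `p i` with `p i ⬝ᵥ p i = t - 1`
and `p i ⬝ᵥ p j ≤ -1` on edges. -/
def IsVecColoring [Fintype V] (G : SimpleGraph V) (t : ℝ) {d : ℕ}
    (p : V → Fin d → ℝ) : Prop :=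
  (∀ i, p i ⬝ᵥ p i = t - 1) ∧ ∀ i j, G.Adj i j → p i ⬝ᵥ p j ≤ -1

/-- The vector chromatic number: the least `t ≥ 1` admitting a vector `t`-coloring. -/
def vecChrom [Fintype V] (G : SimpleGraph V) : ℝ :=
  sInf {t : ℝ | 1 ≤ t ∧ ∃ (d : ℕ) (p : V → Fin d → ℝ), IsVecColoring G t p}

/-- A strict vector `t`-coloring: `p i ⬝ᵥ p j = -1` on edges. -/
def IsStrictVecColoring [Fintype V] (G : SimpleGraph V) (t : ℝ) {d : ℕ}
    (p : V → Fin d → ℝ) : Prop :=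
  (∀ i, p i ⬝ᵥ p i = t - 1) ∧ ∀ i j, G.Adj i j → p i ⬝ᵥ p j = -1

/-- The strict vector chromatic number. -/
def strictVecChrom [Fintype V] (G : SimpleGraph V) : ℝ :=
  sInf {t : ℝ | 1 ≤ t ∧ ∃ (d : ℕ) (p : V → Fin d → ℝ), IsStrictVecColoring G t p}

/-- The Gram matrix of a family of vectors. -/
def gramMat {d : ℕ} (p : V → Fin d → ℝ) : Matrix V V ℝ :=
  Matrix.of fun i j => p i ⬝ᵥ p j

/-- `M` is the Gram matrix of an optimal vector coloring of `G`. -/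
def IsOptGram [Fintype V] (G : SimpleGraph V) (M : Matrix V V ℝ) : Prop :=
  ∃ (d : ℕ) (p : V → Fin d → ℝ), IsVecColoring G (vecChrom G) p ∧ M = gramMat p

/-- `grk G = rk(G)`: the maximum rank of the Gram matrix of an optimal vector coloring. -/
def grk [Fintype V] (G : SimpleGraph V) : ℕ :=
  sSup {r : ℕ | ∃ M : Matrix V V ℝ, IsOptGram G M ∧ M.rank = r}

/-- The categorical (tensor) product of graphs. -/
def catProd (G : SimpleGraph α) (H : SimpleGraph β) : SimpleGraph (α × β) where
  Adj x y := G.Adj x.1 y.1 ∧ H.Adj x.2 y.2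
  symm := by constructor; intro x y hxy; exact ⟨hxy.1.symm, hxy.2.symm⟩
  loopless := by constructor; intro x hx; exact G.loopless.irrefl x.1 hx.1

/-- A feasible dual solution for `vecChrom G`. -/
def IsDualSol [Fintype V] (G : SimpleGraph V) (B : Matrix V V ℝ) : Prop :=
  B.PosSemidef ∧ (∀ i j, i ≠ j → ¬ G.Adj i j → B i j = 0) ∧
    (∀ i j, 0 ≤ B i j) ∧ B.trace = 1

/-- An optimal dual solution for `vecChrom G`: feasible with objective value `vecChrom G`. -/
def IsOptDual [Fintype V] (G : SimpleGraph V) (B : Matrix V V ℝ) : Prop :=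
  IsDualSol G B ∧ (∑ i, ∑ j, B i j) = vecChrom G

/-- The all-ones matrix `J`. -/
def allOnes (γ : Type*) : Matrix γ γ ℝ :=
  Matrix.of fun _ _ => 1

/-- The graph `G(B)` of a (symmetric) matrix `B`: distinct `i, j` adjacent iff `B i j ≠ 0`. -/
def matGraph (B : Matrix V V ℝ) : SimpleGraph V where
  Adj i j := i ≠ j ∧ B i j ≠ 0 ∧ B j i ≠ 0
  symm := by constructor; intro i j hij; exact ⟨hij.1.symm, hij.2.2, hij.2.1⟩
  loopless := by constructor; intro i hi; exact hi.1 rfl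

/-- The spanning subgraph `G^p` of edges tight in the vector coloring `p`. -/
def tightSub [Fintype V] (G : SimpleGraph V) {d : ℕ} (p : V → Fin d → ℝ) :
    SimpleGraph V where
  Adj i j := G.Adj i j ∧ p i ⬝ᵥ p j = -1
  symm := by
    constructor
    intro i j hij
    exact ⟨hij.1.symm, by rw [dotProduct_comm]; exact hij.2⟩
  loopless := by constructor; intro i hi; exact G.loopless.irrefl i hi.1

/-- The skeleton `G^sk`: the spanning subgraph of edges tight in every optimal
vector coloring. -/
def skeleton [Fintype V] (G : SimpleGraph V) : SimpleGraph V where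
  Adj i j := G.Adj i j ∧ ∀ (d : ℕ) (p : V → Fin d → ℝ),
      IsVecColoring G (vecChrom G) p → p i ⬝ᵥ p j = -1
  symm := by
    constructor
    intro i j hij
    refine ⟨hij.1.symm, fun d p hp => ?_⟩
    rw [dotProduct_comm]
    exact hij.2 d p hp
  loopless := by constructor; intro i hi; exact G.loopless.irrefl i hi.1

/-- `i` is neighborly in the vector coloring `p`: `-p i` lies in the conical hull of
the vectors of the `∼_p`-neighbours of `i`. -/
def NeighborlyIn [Fintype V] (G : SimpleGraph V) {d : ℕ} (p : V → Fin d → ℝ)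
    (i : V) : Prop :=
  ∃ c : V → ℝ, (∀ j, 0 ≤ c j) ∧ (∀ j, c j ≠ 0 → G.Adj i j ∧ p i ⬝ᵥ p j = -1) ∧
    -p i = ∑ j, c j • p j

/-- `i` is neighborly: neighborly in every optimal vector coloring. -/
def Neighborly [Fintype V] (G : SimpleGraph V) (i : V) : Prop :=
  ∀ (d : ℕ) (p : V → Fin d → ℝ), IsVecColoring G (vecChrom G) p → NeighborlyIn G p i

/-- `i →_p j`: `-p i = ∑ α_l • p l` over `∼_p`-neighbours `l` of `i`, with `α_j > 0`. -/
def ArrowIn [Fintype V] (G : SimpleGraph V) {d : ℕ} (p : V → Fin d → ℝ)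
    (i j : V) : Prop :=
  ∃ c : V → ℝ, (∀ l, 0 ≤ c l) ∧ (∀ l, c l ≠ 0 → G.Adj i l ∧ p i ⬝ᵥ p l = -1) ∧
    0 < c j ∧ -p i = ∑ l, c l • p l

/-- `μ` is an eigenvalue of `M`. -/
def IsEigenvalue [Fintype V] (M : Matrix V V ℝ) (μ : ℝ) : Prop :=
  ∃ v : V → ℝ, v ≠ 0 ∧ M *ᵥ v = μ • v

/-- `lam` is the largest eigenvalue of `M`. -/
def IsMaxEigenvalue [Fintype V] (M : Matrix V V ℝ) (lam : ℝ) : Prop :=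
  IsGreatest {μ : ℝ | IsEigenvalue M μ} lam

/-- `lam` is the smallest eigenvalue of `M`. -/
def IsMinEigenvalue [Fintype V] (M : Matrix V V ℝ) (lam : ℝ) : Prop :=
  IsLeast {μ : ℝ | IsEigenvalue M μ} lam

/-- The eigenspace of `M` for `μ`. -/
def eigSpace [Fintype V] (M : Matrix V V ℝ) (μ : ℝ) : Submodule ℝ (V → ℝ) :=
  LinearMap.ker (M.mulVecLin - μ • (LinearMap.id : (V → ℝ) →ₗ[ℝ] V → ℝ))

/-- `W` is (the Gram matrix of) a convex combination of vector colorings of `G × H`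
induced by `G` and by `H`: `W = a • (M ⊗ J) + b • (J ⊗ N)`. -/
def IsConvexCombInduced [Fintype α] [Fintype β] (G : SimpleGraph α) (H : SimpleGraph β)
    (W : Matrix (α × β) (α × β) ℝ) : Prop :=
  ∃ (a b : ℝ) (M : Matrix α α ℝ) (N : Matrix β β ℝ),
    0 ≤ a ∧ 0 ≤ b ∧ a + b = 1 ∧ IsOptGram G M ∧ IsOptGram H N ∧
    W = a • (M ⊗ₖ allOnes β) + b • (allOnes α ⊗ₖ N)

end VectorColoring

/-!
A strict vector coloring of a factor pulls back along the projection, so `χ_sv(G × H)` is at most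
the minimum. For the converse, strong duality for the semidefinite program defining `χ_sv`
(obtained by separating the affine space of admissible Gram matrices from the open cone of
matrices with positive definite quadratic form) gives, for every `x < χ_sv(G)`, a positive
semidefinite `B` of trace `1`, supported on the diagonal and the edges of `G`, with entry sum at
least `x`; likewise `C` for `H` and `y < χ_sv(H)`. For a strict `t`-coloring `p` of `G × H` and
strict `s`-colorings `P`, `Q` of `G`, `H`, the Schur product
`gram p ⊙ (B ⊗ C) ⊙ (gram P ⊗ gram Q + (s - 1) J)` is positive semidefinite, and its entries
vanish wherever one coordinate is equal and the other adjacent, because there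
`gram P ⊗ gram Q = -(s - 1)`. Its entry sum is therefore
`s ((s - 1)(t - 1) - (∑ B - 1)(∑ C - 1)) ≥ 0`, so `(x - 1)(y - 1) ≤ (t - 1)(s - 1)`; letting `x`,
`y` and `s` tend to `χ_sv(G)`, `χ_sv(H)` and their maximum gives `t ≥ min (χ_sv G) (χ_sv H)`.
-/

open Filter Topology

section Matrices

variable {V : Type*} [Fintype V]

theorem isOpen_setOf_forall_dotProduct_mulVec_pos :
    IsOpen {A : Matrix V V ℝ | ∀ x ≠ 0, 0 < x ⬝ᵥ A *ᵥ x} := by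
  refine isOpen_iff_mem_nhds.mpr fun A hA => ?_
  have hcont : Continuous fun z : Matrix V V ℝ × (V → ℝ) => z.2 ⬝ᵥ z.1 *ᵥ z.2 := by
    fun_prop
  have hsphere : ∀ᶠ B in 𝓝 A, ∀ y ∈ Metric.sphere (0 : V → ℝ) 1, 0 < y ⬝ᵥ B *ᵥ y :=
    (isCompact_sphere _ _).eventually_forall_of_forall_eventually fun y hy =>
      hcont.continuousAt.eventually (lt_mem_nhds (hA y (ne_zero_of_mem_unit_sphere ⟨y, hy⟩)))
  filter_upwards [hsphere] with B hB x hx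
  have hnorm : 0 < ‖x‖ := norm_pos_iff.mpr hx
  have hy : ‖x‖⁻¹ • x ∈ Metric.sphere (0 : V → ℝ) 1 := by
    simp [norm_smul, hnorm.ne']
  have := hB _ hy
  rw [mulVec_smul, smul_dotProduct, dotProduct_smul, smul_eq_mul, smul_eq_mul] at this
  have hinv := inv_pos.mpr hnorm
  rwa [← mul_assoc, mul_pos_iff_of_pos_left (mul_pos hinv hinv)] at this

theorem convex_setOf_forall_dotProduct_mulVec_pos :
    Convex ℝ {A : Matrix V V ℝ | ∀ x ≠ 0, 0 < x ⬝ᵥ A *ᵥ x} := by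
  intro A hA B hB a b ha hb hab x hx
  simp only [add_mulVec, smul_mulVec, dotProduct_add, dotProduct_smul, smul_eq_mul]
  rcases ha.eq_or_lt with rfl | ha
  · nlinarith [hB x hx]
  · nlinarith [hA x hx, hB x hx]

theorem posSemidef_half_smul_add_transpose {X : Matrix V V ℝ}
    (hX : ∀ x, 0 ≤ x ⬝ᵥ X *ᵥ x) : ((2⁻¹ : ℝ) • (X + Xᵀ)).PosSemidef := by
  refine .of_dotProduct_mulVec_nonneg ?_ fun x => ?_
  · simp [IsHermitian, add_comm]
  · have : x ⬝ᵥ Xᵀ *ᵥ x = x ⬝ᵥ X *ᵥ x := by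
      rw [mulVec_transpose, dotProduct_comm, dotProduct_mulVec]
    simp only [star_trivial, smul_mulVec, add_mulVec, dotProduct_smul, dotProduct_add, this,
      smul_eq_mul]
    nlinarith [hX x]

theorem posSemidef_allOnes (γ : Type*) [Fintype γ] : (allOnes γ).PosSemidef := by
  have : allOnes γ = vecMulVec 1 (star 1) := by
    ext
    simp [allOnes, vecMulVec_apply]
  exact this ▸ posSemidef_vecMulVec_self_star 1

theorem Matrix.PosSemidef.sum_sum_nonneg {A : Matrix V V ℝ} (hA : A.PosSemidef) :
    0 ≤ ∑ i, ∑ j, A i j := by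
  simpa [dotProduct, mulVec, Finset.sum_comm] using hA.dotProduct_mulVec_nonneg 1

theorem sum_sum_prod_mul {α β R : Type*} [Fintype α] [Fintype β] [CommSemiring R]
    (f : α → α → R) (g : β → β → R) :
    ∑ u : α × β, ∑ w : α × β, f u.1 w.1 * g u.2 w.2 = (∑ i, ∑ j, f i j) * ∑ l, ∑ k, g l k := by
  simp only [Fintype.sum_prod_type, Finset.sum_mul_sum]

end Matrices

section GramMatrices

variable {V : Type*} [Fintype V]

theorem posSemidef_gramMat {d : ℕ} (p : V → Fin d → ℝ) : (gramMat p).PosSemidef := by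
  have : gramMat p = Matrix.of p * (Matrix.of p)ᴴ := by
    ext i j
    simp [gramMat, mul_apply, dotProduct]
  rw [this]
  exact posSemidef_self_mul_conjTranspose _

theorem exists_gramMat_eq_of_posSemidef {X : Matrix V V ℝ} (hX : X.PosSemidef) :
    ∃ (d : ℕ) (p : V → Fin d → ℝ), gramMat p = X := by
  obtain ⟨d, v, rfl⟩ := posSemidef_iff_eq_sum_vecMulVec.mp hX
  refine ⟨d, fun i a => v a i, ?_⟩
  ext i j
  simp [gramMat, dotProduct, vecMulVec_apply, Matrix.sum_apply]

end GramMatrices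

section StrictVecColoring

variable {V W : Type*} [Fintype V] [Fintype W] {G : SimpleGraph V} {t s : ℝ}

theorem IsStrictVecColoring.comp {G' : SimpleGraph W} {d : ℕ} {p : V → Fin d → ℝ}
    (hp : IsStrictVecColoring G t p) (f : G' →g G) : IsStrictVecColoring G' t (p ∘ f) :=
  ⟨fun i => hp.1 (f i), fun _ _ h => hp.2 _ _ (f.map_rel h)⟩

theorem exists_isStrictVecColoring_of_posSemidef {X : Matrix V V ℝ} (hX : X.PosSemidef)
    (hdiag : ∀ i, X i i = t - 1) (hadj : ∀ i j, G.Adj i j → X i j = -1) :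
    ∃ (d : ℕ) (p : V → Fin d → ℝ), IsStrictVecColoring G t p := by
  obtain ⟨d, p, rfl⟩ := exists_gramMat_eq_of_posSemidef hX
  exact ⟨d, p, hdiag, hadj⟩

theorem IsStrictVecColoring.exists_of_le {d : ℕ} {p : V → Fin d → ℝ}
    (hp : IsStrictVecColoring G t p) (hts : t ≤ s) :
    ∃ (d' : ℕ) (q : V → Fin d' → ℝ), IsStrictVecColoring G s q := by
  classical
  refine exists_isStrictVecColoring_of_posSemidef
    ((posSemidef_gramMat p).add (PosSemidef.one.smul (sub_nonneg.mpr hts)))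
    (fun i => ?_) (fun i j hij => ?_)
  · simp [gramMat, hp.1 i]
  · simp [gramMat, hp.2 i j hij, G.ne_of_adj hij]

theorem exists_isStrictVecColoring (G : SimpleGraph V) :
    ∃ (d : ℕ) (p : V → Fin d → ℝ), IsStrictVecColoring G (Fintype.card V + 1) p := by
  classical
  refine exists_isStrictVecColoring_of_posSemidef
    ((SimpleGraph.posSemidef_lapMatrix ℝ ⊤).add PosSemidef.one)
    (fun i => ?_) (fun i j hij => ?_)
  · have : 0 < Fintype.card V := Fintype.card_pos_iff.mpr ⟨i⟩
    simp [SimpleGraph.lapMatrix, SimpleGraph.degMatrix, Nat.cast_sub this]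
  · simp [SimpleGraph.lapMatrix, SimpleGraph.degMatrix, G.ne_of_adj hij]

theorem strictVecChrom_le {d : ℕ} {p : V → Fin d → ℝ} (hp : IsStrictVecColoring G t p)
    (ht : 1 ≤ t) : strictVecChrom G ≤ t :=
  csInf_le ⟨1, fun _ h => h.1⟩ ⟨ht, d, p, hp⟩

theorem le_strictVecChrom {a : ℝ}
    (h : ∀ (t : ℝ) (d : ℕ) (p : V → Fin d → ℝ), 1 ≤ t → IsStrictVecColoring G t p → a ≤ t) :
    a ≤ strictVecChrom G := by
  obtain ⟨d, p, hp⟩ := exists_isStrictVecColoring G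
  exact le_csInf ⟨_, le_add_of_nonneg_left (Nat.cast_nonneg _), d, p, hp⟩
    fun t ⟨ht, d, p, hp⟩ => h t d p ht hp

theorem one_le_strictVecChrom (G : SimpleGraph V) : 1 ≤ strictVecChrom G :=
  le_strictVecChrom fun _ _ _ ht _ => ht

theorem exists_isStrictVecColoring_of_strictVecChrom_lt (h : strictVecChrom G < s) :
    ∃ (d : ℕ) (p : V → Fin d → ℝ), IsStrictVecColoring G s p := by
  obtain ⟨d, p, hp⟩ := exists_isStrictVecColoring G
  obtain ⟨t, ⟨-, d, p, hp⟩, hts⟩ :=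
    exists_lt_of_csInf_lt (by exact ⟨_, le_add_of_nonneg_left (Nat.cast_nonneg _), d, p, hp⟩) h
  exact hp.exists_of_le hts.le

theorem strictVecChrom_le_of_hom {G' : SimpleGraph W} (f : G' →g G) :
    strictVecChrom G' ≤ strictVecChrom G :=
  le_strictVecChrom fun _ _ _ ht hp => strictVecChrom_le (hp.comp f) ht

end StrictVecColoring

section Duality

theorem exists_separating_of_disjoint_cone {E : Type*} [AddCommGroup E] [Module ℝ E]
    [TopologicalSpace E] [IsTopologicalAddGroup E] [ContinuousSMul ℝ E] {K T : Set E}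
    (hKo : IsOpen K) (hKc : Convex ℝ K)
    (hKne : K.Nonempty) (hcone : ∀ x ∈ K, ∀ c : ℝ, 0 < c → c • x ∈ K) (hTc : Convex ℝ T)
    (hKT : Disjoint K T) :
    ∃ f : StrongDual ℝ E,
      (∀ x ∈ K, 0 ≤ f x) ∧ (∀ y ∈ T, f y ≤ 0) ∧ ∀ x ∈ K, ∀ y ∈ T, f y < f x := by
  obtain ⟨f, u, hfK, hfT⟩ := geometric_hahn_banach_open hKc hKo hTc hKT
  have hscale : ∀ x ∈ K, ∀ c : ℝ, 0 < c → c * f x < u := fun x hx c hc => by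
    simpa using hfK _ (hcone x hx c hc)
  have hK : ∀ x ∈ K, f x ≤ 0 := by
    intro x hx
    by_contra! hpos
    have := hscale x hx ((|u| + 1) / f x) (by positivity)
    rw [div_mul_cancel₀ _ hpos.ne'] at this
    linarith [le_abs_self u]
  have hu : 0 ≤ u := by
    obtain ⟨x, hx⟩ := hKne
    have hlim : Tendsto (fun c : ℝ => c * f x) (𝓝[>] 0) (𝓝 0) := by
      simpa using ((continuous_mul_const (f x)).tendsto 0).mono_left nhdsWithin_le_nhds
    exact le_of_tendsto hlim (eventually_nhdsWithin_of_forall fun c hc => (hscale x hx c hc).le)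
  refine ⟨-f, fun x hx => ?_, fun y hy => ?_, fun x hx y hy => ?_⟩
  · simpa using hK x hx
  · simpa using hu.trans (hfT y hy)
  · simpa using (hfK x hx).trans_le (hfT y hy)

variable {V : Type*} [Fintype V] [DecidableEq V]

noncomputable def symmRepr (f : Matrix V V ℝ →ₗ[ℝ] ℝ) : Matrix V V ℝ :=
  of fun i j => (f (single i j 1) + f (single j i 1)) / 2

theorem apply_eq_sum_mul_symmRepr (f : Matrix V V ℝ →ₗ[ℝ] ℝ) {X : Matrix V V ℝ}
    (hX : X.IsSymm) : f X = ∑ i, ∑ j, X i j * symmRepr f i j := by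
  have h₁ : f X = ∑ i, ∑ j, X i j * f (single i j 1) := by
    conv_lhs => rw [matrix_eq_sum_single X]
    simp only [map_sum]
    refine Finset.sum_congr rfl fun i _ => Finset.sum_congr rfl fun j _ => ?_
    rw [← smul_eq_mul, ← map_smul, smul_single, smul_eq_mul, mul_one]
  have h₂ : f X = ∑ i, ∑ j, X i j * f (single j i 1) := by
    rw [h₁, Finset.sum_comm]
    simp only [hX.apply]
  calc f X = (∑ i, ∑ j, X i j * f (single i j 1) + ∑ i, ∑ j, X i j * f (single j i 1)) / 2 := by
        rw [← h₁, ← h₂]; ring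
    _ = ∑ i, ∑ j, X i j * symmRepr f i j := by
        simp only [← Finset.sum_add_distrib, Finset.sum_div]
        exact Finset.sum_congr rfl fun i _ => Finset.sum_congr rfl fun j _ => by
          simp only [symmRepr, of_apply]; ring

theorem posSemidef_symmRepr (f : Matrix V V ℝ →ₗ[ℝ] ℝ)
    (hf : ∀ A : Matrix V V ℝ, A.PosDef → 0 ≤ f A) : (symmRepr f).PosSemidef := by
  refine .of_dotProduct_mulVec_nonneg ?_ fun x => ?_
  · ext i j
    simp [symmRepr, add_comm]
  · have hxx : 0 ≤ f (vecMulVec x x) := by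
      have hlim : Tendsto (fun ε : ℝ => f (vecMulVec x x) + ε * f 1) (𝓝[>] 0)
          (𝓝 (f (vecMulVec x x))) := by
        refine tendsto_nhdsWithin_of_tendsto_nhds ?_
        simpa using ((continuous_mul_const (f 1)).tendsto 0).const_add (f (vecMulVec x x))
      refine ge_of_tendsto hlim (eventually_nhdsWithin_of_forall fun ε (hε : 0 < ε) => ?_)
      have hpd := PosDef.posSemidef_add (posSemidef_vecMulVec_self_star x) (PosDef.one.smul hε)
      simpa using hf _ hpd
    rw [apply_eq_sum_mul_symmRepr f (transpose_vecMulVec x x)] at hxx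
    refine hxx.trans_eq ?_
    simp only [star_trivial, dotProduct, mulVec, vecMulVec_apply, Finset.mul_sum]
    exact Finset.sum_congr rfl fun i _ => Finset.sum_congr rfl fun j _ => by ring

end Duality

section StrictGramSet

variable {V : Type*} {G : SimpleGraph V} {t : ℝ}

def strictGramSet (G : SimpleGraph V) (t : ℝ) : Set (Matrix V V ℝ) :=
  {X | (∀ i, X i i = t - 1) ∧ ∀ i j, G.Adj i j → X i j = -1}

theorem convex_strictGramSet : Convex ℝ (strictGramSet G t) := by
  rintro X ⟨hXd, hXa⟩ Y ⟨hYd, hYa⟩ a b - - hab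
  refine ⟨fun i => ?_, fun i j hij => ?_⟩
  · simp [hXd, hYd, ← add_mul, hab]
  · simp [hXa i j hij, hYa i j hij]
    linarith

theorem sub_adjMatrix_mem_strictGramSet [DecidableEq V] [DecidableRel G.Adj] :
    (t - 1) • (1 : Matrix V V ℝ) - G.adjMatrix ℝ ∈ strictGramSet G t :=
  ⟨fun i => by simp, fun i j h => by simp [h, G.ne_of_adj h]⟩

/-- `strictGramSet G t` is invariant under adding multiples of `single i j 1 + single j i 1` for
distinct non-adjacent `i`, `j`, so a linear functional bounded above on it kills these. -/
theorem symmRepr_eq_zero_of_nonpos [DecidableEq V] {f : Matrix V V ℝ →ₗ[ℝ] ℝ}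
    (hf : ∀ X ∈ strictGramSet G t, f X ≤ 0) {i j : V} (hij : i ≠ j) (hnadj : ¬G.Adj i j) :
    symmRepr f i j = 0 := by
  classical
  set M := (t - 1) • (1 : Matrix V V ℝ) - G.adjMatrix ℝ
  have hM : M ∈ strictGramSet G t := sub_adjMatrix_mem_strictGramSet
  set D := single i j (1 : ℝ) + single j i 1
  have hD : ∀ c : ℝ, f M + c * f D ≤ 0 := fun c => by
    refine (by simp : f M + c * f D = f (M + c • D)) ▸ hf _ ⟨fun k => ?_, fun k l hkl => ?_⟩
    · simp only [Matrix.add_apply, Matrix.smul_apply, hM.1 k, D, single_apply]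
      split_ifs <;> simp_all
    · have hlk := hkl.symm
      simp only [Matrix.add_apply, Matrix.smul_apply, hM.2 k l hkl, D, single_apply]
      split_ifs <;> simp_all
  have hD0 : f D = 0 := by
    by_contra h0
    have := hD ((|f M| + 1) / f D)
    rw [div_mul_cancel₀ _ h0] at this
    linarith [neg_abs_le (f M)]
  simpa [symmRepr, D, single_apply, hij, Ne.symm hij] using hD0

end StrictGramSet

section StrictDual

variable {V : Type*} [Fintype V] {G : SimpleGraph V} {t : ℝ}

/-- A feasible solution of the dual of the semidefinite program defining `strictVecChrom G`;
its value is `∑ i, ∑ j, B i j`. -/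
def IsStrictDualSol (G : SimpleGraph V) (B : Matrix V V ℝ) : Prop :=
  B.PosSemidef ∧ (∀ i j, i ≠ j → ¬G.Adj i j → B i j = 0) ∧ B.trace = 1

theorem sum_eq_trace_add_sum_adj [DecidableRel G.Adj] {B : Matrix V V ℝ}
    (hB : ∀ i j, i ≠ j → ¬G.Adj i j → B i j = 0) :
    ∑ i, ∑ j, B i j = B.trace + ∑ i, ∑ j, if G.Adj i j then B i j else 0 := by
  classical
  have hsplit : ∀ i j, B i j = (if i = j then B i j else 0) + if G.Adj i j then B i j else 0 := by
    intro i j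
    by_cases hij : i = j
    · subst hij; simp
    · by_cases h : G.Adj i j <;> simp [hij, h, hB]
  rw [Finset.sum_congr rfl fun i _ => Finset.sum_congr rfl fun j _ => hsplit i j]
  simp [Finset.sum_add_distrib, trace]

theorem disjoint_strictGramSet (ht₁ : 1 ≤ t) (ht : t < strictVecChrom G) :
    Disjoint {A : Matrix V V ℝ | ∀ x ≠ 0, 0 < x ⬝ᵥ A *ᵥ x} (strictGramSet G t) := by
  refine Set.disjoint_left.mpr fun X hXK ⟨hdiag, hadj⟩ => ?_
  have hX : ∀ x, 0 ≤ x ⬝ᵥ X *ᵥ x := fun x => by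
    rcases eq_or_ne x 0 with rfl | hx
    · simp
    · exact (hXK x hx).le
  obtain ⟨d, p, hp⟩ := exists_isStrictVecColoring_of_posSemidef (G := G) (t := t)
    (posSemidef_half_smul_add_transpose hX) (fun i => by simp [hdiag]; ring)
    (fun i j hij => by simp [hadj i j hij, hadj j i hij.symm]; norm_num)
  exact ht.not_ge (strictVecChrom_le hp ht₁)

theorem exists_isStrictDualSol_of_lt_strictVecChrom (ht₁ : 1 ≤ t)
    (ht : t < strictVecChrom G) : ∃ B, IsStrictDualSol G B ∧ t ≤ ∑ i, ∑ j, B i j := by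
  classical
  have hPD : ∀ A : Matrix V V ℝ, A.PosDef → ∀ x ≠ 0, 0 < x ⬝ᵥ A *ᵥ x := fun A hA x hx => by
    simpa using hA.dotProduct_mulVec_pos hx
  obtain ⟨f, hfK, hfT, hsep⟩ := exists_separating_of_disjoint_cone
    isOpen_setOf_forall_dotProduct_mulVec_pos convex_setOf_forall_dotProduct_mulVec_pos
    ⟨1, hPD 1 PosDef.one⟩
    (fun A hA c hc x hx => by simpa [smul_mulVec] using mul_pos hc (hA x hx))
    convex_strictGramSet (disjoint_strictGramSet ht₁ ht)
  set B := symmRepr (f : Matrix V V ℝ →ₗ[ℝ] ℝ)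
  have hB : B.PosSemidef := posSemidef_symmRepr _ fun A hA => hfK A (hPD A hA)
  have hsupp : ∀ i j, i ≠ j → ¬G.Adj i j → B i j = 0 := fun i j =>
    symmRepr_eq_zero_of_nonpos hfT
  set M := (t - 1) • (1 : Matrix V V ℝ) - G.adjMatrix ℝ
  have hM : M ∈ strictGramSet G t := sub_adjMatrix_mem_strictGramSet
  have hMsymm : M.IsSymm := by simp [M, IsSymm, transpose_sub]
  have hf : ∀ X : Matrix V V ℝ, X.IsSymm → f X = ∑ i, ∑ j, X i j * B i j :=
    fun X hX => apply_eq_sum_mul_symmRepr _ hX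
  have hfM : f M = (t - 1) * B.trace - ∑ i, ∑ j, if G.Adj i j then B i j else 0 := by
    simp [hf M hMsymm, M, sub_mul, Finset.sum_sub_distrib, one_apply, ite_mul, trace,
      Finset.mul_sum]
  have htr : 0 < B.trace := by
    refine hB.trace_nonneg.lt_of_ne fun h0 => ?_
    have hB0 := hB.trace_eq_zero_iff.mp h0.symm
    have := hsep 1 (hPD 1 PosDef.one) M hM
    simp [hf M hMsymm, hf 1 isSymm_one, hB0] at this
  refine ⟨B.trace⁻¹ • B, ⟨hB.smul (inv_nonneg.mpr htr.le),
    fun i j hij h => by simp [hsupp i j hij h], by simp [trace_smul, htr.ne']⟩, ?_⟩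
  have hsum := sum_eq_trace_add_sum_adj hsupp
  have hfM₀ := hfT M hM
  simp only [Matrix.smul_apply, smul_eq_mul, ← Finset.mul_sum]
  rw [le_inv_mul_iff₀ htr]
  linarith

end StrictDual

theorem min_le_of_forall_sub_one_mul_le {a b t : ℝ} (ht : 1 ≤ t)
    (h : ∀ x y s, 1 ≤ x → x < a → 1 ≤ y → y < b → max a b < s →
      (x - 1) * (y - 1) ≤ (t - 1) * (s - 1)) :
    min a b ≤ t := by
  by_contra! hlt
  have ha : 1 < a := ht.trans_lt (hlt.trans_le (min_le_left a b))
  have hb : 1 < b := ht.trans_lt (hlt.trans_le (min_le_right a b))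
  have hpos : (t - 1) * (max a b - 1) < (a - 1) * (b - 1) := by
    rcases le_total a b with hab | hab
    · rw [min_eq_left hab] at hlt
      rw [max_eq_right hab]
      exact mul_lt_mul_of_pos_right (by linarith) (by linarith)
    · rw [min_eq_right hab] at hlt
      rw [max_eq_left hab, mul_comm (a - 1)]
      exact mul_lt_mul_of_pos_right (by linarith) (by linarith)
  have hnear : ∀ᶠ ε in 𝓝 (0 : ℝ), (t - 1) * (max a b + ε - 1) < (a - ε - 1) * (b - ε - 1) ∧
      1 < a - ε ∧ 1 < b - ε :=
    (ContinuousAt.eventually_lt (by fun_prop) (by fun_prop) (by simpa using hpos)).and <|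
      (ContinuousAt.eventually_lt continuousAt_const (by fun_prop) (by simpa using ha)).and <|
        ContinuousAt.eventually_lt continuousAt_const (by fun_prop) (by simpa using hb)
  obtain ⟨ε, ⟨hε, hεa, hεb⟩, hε0 : 0 < ε⟩ :=
    ((hnear.filter_mono nhdsWithin_le_nhds).and (self_mem_nhdsWithin (s := Set.Ioi 0))).exists
  exact (h _ _ _ hεa.le (by linarith) hεb.le (by linarith) (by linarith)).not_gt hε

section CategoricalProduct

variable {α β : Type*} [Fintype α] [Fintype β] {G : SimpleGraph α} {H : SimpleGraph β}

theorem IsStrictVecColoring.hadamard_kronecker_apply [DecidableEq α] [DecidableEq β]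
    [DecidableRel G.Adj] [DecidableRel H.Adj] {t s : ℝ} {d dP dQ : ℕ}
    {p : α × β → Fin d → ℝ} {P : α → Fin dP → ℝ} {Q : β → Fin dQ → ℝ}
    (hp : IsStrictVecColoring (catProd G H) t p) (hP : IsStrictVecColoring G s P)
    (hQ : IsStrictVecColoring H s Q) {B : Matrix α α ℝ} {C : Matrix β β ℝ}
    (hB : ∀ i j, i ≠ j → ¬G.Adj i j → B i j = 0) (hC : ∀ l k, l ≠ k → ¬H.Adj l k → C l k = 0)
    (u w : α × β) :
    (gramMat p ⊙ ((B ⊗ₖ C) ⊙ (gramMat P ⊗ₖ gramMat Q + (s - 1) • allOnes (α × β)))) u w =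
      s * ((s - 1) * (t - 1) *
        ((if u.1 = w.1 then B u.1 w.1 else 0) * (if u.2 = w.2 then C u.2 w.2 else 0)) -
        (if G.Adj u.1 w.1 then B u.1 w.1 else 0) * (if H.Adj u.2 w.2 then C u.2 w.2 else 0)) := by
  obtain ⟨i, l⟩ := u
  obtain ⟨j, k⟩ := w
  simp only [hadamard_apply, kronecker_apply, Matrix.add_apply, Matrix.smul_apply, gramMat,
    allOnes, of_apply, smul_eq_mul, mul_one]
  rcases eq_or_ne i j with rfl | hij
  · rcases eq_or_ne l k with rfl | hlk
    · simp [hp.1, hP.1, hQ.1]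
      ring
    · by_cases hHlk : H.Adj l k
      · simp [hlk, hP.1, hQ.2 l k hHlk]
      · simp [hlk, hHlk, hC l k hlk hHlk]
  · by_cases hGij : G.Adj i j
    · rcases eq_or_ne l k with rfl | hlk
      · simp [hij, hGij, hQ.1, hP.2 i j hGij]
      · by_cases hHlk : H.Adj l k
        · have hpe := hp.2 (i, l) (j, k) ⟨hGij, hHlk⟩
          simp [hij, hlk, hGij, hHlk, hP.2 i j hGij, hQ.2 l k hHlk, hpe]
          ring
        · simp [hlk, hHlk, hC l k hlk hHlk]
    · simp [hij, hGij, hB i j hij hGij]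

theorem IsStrictDualSol.sub_one_mul_sub_one_le {t s : ℝ} {d dP dQ : ℕ}
    {p : α × β → Fin d → ℝ} {P : α → Fin dP → ℝ} {Q : β → Fin dQ → ℝ}
    {B : Matrix α α ℝ} {C : Matrix β β ℝ} (hB : IsStrictDualSol G B) (hC : IsStrictDualSol H C)
    (hp : IsStrictVecColoring (catProd G H) t p) (hP : IsStrictVecColoring G s P)
    (hQ : IsStrictVecColoring H s Q) (hs : 1 ≤ s) :
    (∑ i, ∑ j, B i j - 1) * (∑ l, ∑ k, C l k - 1) ≤ (t - 1) * (s - 1) := by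
  classical
  have hZ : (gramMat p ⊙ ((B ⊗ₖ C) ⊙
      (gramMat P ⊗ₖ gramMat Q + (s - 1) • allOnes (α × β)))).PosSemidef :=
    (posSemidef_gramMat p).hadamard <| (hB.1.kronecker hC.1).hadamard <|
      ((posSemidef_gramMat P).kronecker (posSemidef_gramMat Q)).add
        ((posSemidef_allOnes _).smul (sub_nonneg.mpr hs))
  have hdiag : ∑ u : α × β, ∑ w : α × β,
      (if u.1 = w.1 then B u.1 w.1 else 0) * (if u.2 = w.2 then C u.2 w.2 else 0) = 1 := by
    rw [sum_sum_prod_mul (fun i j => if i = j then B i j else 0)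
      (fun l k => if l = k then C l k else 0)]
    simpa [trace] using congr($(hB.2.2) * $(hC.2.2))
  have hadj : ∑ u : α × β, ∑ w : α × β,
      (if G.Adj u.1 w.1 then B u.1 w.1 else 0) * (if H.Adj u.2 w.2 then C u.2 w.2 else 0) =
      (∑ i, ∑ j, B i j - 1) * (∑ l, ∑ k, C l k - 1) := by
    rw [sum_sum_prod_mul (fun i j => if G.Adj i j then B i j else 0)
      (fun l k => if H.Adj l k then C l k else 0), sum_eq_trace_add_sum_adj hB.2.1,
      sum_eq_trace_add_sum_adj hC.2.1, hB.2.2, hC.2.2]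
    ring
  have hsum := hZ.sum_sum_nonneg
  simp only [hp.hadamard_kronecker_apply hP hQ hB.2.1 hC.2.1, ← Finset.mul_sum,
    Finset.sum_sub_distrib, hdiag, hadj] at hsum
  linarith [(mul_nonneg_iff_of_pos_left (by linarith : (0 : ℝ) < s)).mp hsum]

theorem min_strictVecChrom_le {t : ℝ} {d : ℕ} {p : α × β → Fin d → ℝ}
    (hp : IsStrictVecColoring (catProd G H) t p) (ht : 1 ≤ t) :
    min (strictVecChrom G) (strictVecChrom H) ≤ t := by
  refine min_le_of_forall_sub_one_mul_le ht fun x y s hx hxG hy hyH hs => ?_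
  obtain ⟨B, hB, hxB⟩ := exists_isStrictDualSol_of_lt_strictVecChrom hx hxG
  obtain ⟨C, hC, hyC⟩ := exists_isStrictDualSol_of_lt_strictVecChrom hy hyH
  obtain ⟨_, P, hP⟩ :=
    exists_isStrictVecColoring_of_strictVecChrom_lt ((le_max_left _ _).trans_lt hs)
  obtain ⟨_, Q, hQ⟩ :=
    exists_isStrictVecColoring_of_strictVecChrom_lt ((le_max_right _ _).trans_lt hs)
  have hs₁ : 1 ≤ s := (one_le_strictVecChrom G).trans ((le_max_left _ _).trans hs.le)
  calc (x - 1) * (y - 1) ≤ (∑ i, ∑ j, B i j - 1) * (∑ l, ∑ k, C l k - 1) :=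
        mul_le_mul (by linarith) (by linarith) (by linarith) (by linarith)
    _ ≤ (t - 1) * (s - 1) := hB.sub_one_mul_sub_one_le hC hp hP hQ hs₁

end CategoricalProduct

/-- Strict vector coloring analog of Hedetniemi's conjecture:
`χ_sv(G × H) = min {χ_sv(G), χ_sv(H)}`. -/
theorem strictVecChrom_catProd {α β : Type*} [Fintype α] [Fintype β]
    (G : SimpleGraph α) (H : SimpleGraph β) :
    strictVecChrom (catProd G H) = min (strictVecChrom G) (strictVecChrom H) :=
  le_antisymm
    (le_min (strictVecChrom_le_of_hom ⟨Prod.fst, fun h => h.1⟩)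
      (strictVecChrom_le_of_hom ⟨Prod.snd, fun h => h.2⟩))
    (le_strictVecChrom fun _ _ _ ht hp => min_strictVecChrom_le hp ht)
end

section
/- Let G be a finite simple graph with at least one edge. Then a vertex i of G is neighborly if and only if i is not an isolated vertex of the skeleton G^sk. -/
open Matrix Kronecker

/-!
Averaging the Gram matrices of optimal vector colorings gives an optimal coloring `p` whose
tight edges are exactly the skeleton edges. If `i` is neighborly in `p`, then, as `p i ≠ 0`,
some coefficient of `-p i` as a conical combination is nonzero, and it belongs to a tight,
hence skeleton, neighbour. Conversely, if `i` is not neighborly in an optimal `p`, Farkas'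
lemma gives `y` with `y ⬝ᵥ p i < 0` and `y ⬝ᵥ p j ≤ 0` for the tight neighbours `j`; moving
`p i` slightly along `y` shortens it, and stretching it back to length `√(t - 1)` makes
every edge at `i` slack, so no edge at `i` lies in the skeleton. Optimal colorings exist
because every coloring can be realised in `ℝ^|V|`, where colorings of bounded `t` form a
compact set.
-/

open Matrix Finset Filter Topology

section DotProduct

variable {ι : Type*} [Fintype ι]

lemma dotProduct_self_nonneg (v : ι → ℝ) : 0 ≤ v ⬝ᵥ v := by
  simpa using dotProduct_star_self_nonneg v

lemma dotProduct_self_pos {v : ι → ℝ} (hv : v ≠ 0) : 0 < v ⬝ᵥ v :=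
  (dotProduct_self_nonneg v).lt_of_ne' (dotProduct_self_eq_zero.not.mpr hv)

lemma sq_le_dotProduct_self (v : ι → ℝ) (k : ι) : v k ^ 2 ≤ v ⬝ᵥ v := by
  rw [sq]
  exact single_le_sum (fun l _ => mul_self_nonneg (v l)) (mem_univ k)

theorem farkas_dotProduct {κ : Type*} [Fintype κ] (s : Finset κ) (v : κ → ι → ℝ)
    (x : ι → ℝ) :
    (∃ c : κ → ℝ, (∀ l, 0 ≤ c l) ∧ (∀ l, c l ≠ 0 → l ∈ s) ∧ x = ∑ l, c l • v l) ∨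
      ∃ y : ι → ℝ, (∀ l ∈ s, y ⬝ᵥ v l ≤ 0) ∧ 0 < y ⬝ᵥ x := by
  classical
  induction s using Finset.induction generalizing v x with
  | empty =>
    by_cases hx : x = 0
    · exact Or.inl ⟨0, fun _ => le_rfl, fun _ h => absurd rfl h, by simp [hx]⟩
    · exact Or.inr ⟨x, by simp, dotProduct_self_pos hx⟩
  | @insert a s _ ih =>
    rcases ih v x with ⟨c, hc0, hcs, hcx⟩ | ⟨y, hy, hyx⟩
    · exact Or.inl ⟨c, hc0, fun l hl => mem_insert_of_mem (hcs l hl), hcx⟩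
    by_cases hya : y ⬝ᵥ v a ≤ 0
    · exact Or.inr ⟨y, (forall_mem_insert _ _ _).mpr ⟨hya, hy⟩, hyx⟩
    rw [not_le] at hya
    -- Project along `v a` onto `y ⬝ᵥ · = 0` and recurse: either answer lifts back.
    set P : (ι → ℝ) → ι → ℝ := fun u => u - (y ⬝ᵥ u / y ⬝ᵥ v a) • v a with hP
    rcases ih (P ∘ v) (P x) with ⟨c, hc0, hcs, hcx⟩ | ⟨z, hz, hzx⟩
    · set μ := y ⬝ᵥ x / y ⬝ᵥ v a - ∑ l, c l * (y ⬝ᵥ v l / y ⬝ᵥ v a)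
      have hμ : 0 ≤ μ := by
        have hterm : ∀ l, c l * (y ⬝ᵥ v l / y ⬝ᵥ v a) ≤ 0 := fun l => by
          by_cases hcl : c l = 0
          · simp [hcl]
          · exact mul_nonpos_of_nonneg_of_nonpos (hc0 l)
              (div_nonpos_of_nonpos_of_nonneg (hy l (hcs l hcl)) hya.le)
        linarith [sum_nonpos fun l (_ : l ∈ univ) => hterm l, div_pos hyx hya]
      have hx : x = ∑ l, c l • v l + μ • v a := by
        simp only [hP, Function.comp_apply, smul_sub, smul_smul, sum_sub_distrib,
          ← sum_smul] at hcx
        linear_combination (norm := module) hcx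
      refine Or.inl ⟨c + Pi.single a μ, fun l => ?_, fun l hl => ?_, ?_⟩
      · rcases eq_or_ne l a with rfl | hla
        · simpa using add_nonneg (hc0 l) hμ
        · simpa [hla] using hc0 l
      · rcases eq_or_ne l a with rfl | hla
        · exact mem_insert_self l s
        · exact mem_insert_of_mem (hcs l (by simpa [hla] using hl))
      · simp [add_smul, sum_add_distrib, Pi.single_apply, ite_smul, hx]
    · set w := z - (z ⬝ᵥ v a / y ⬝ᵥ v a) • y
      have hw : ∀ u, w ⬝ᵥ u = z ⬝ᵥ P u := fun u => by
        simp only [w, hP, sub_dotProduct, dotProduct_sub, smul_dotProduct, dotProduct_smul,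
          smul_eq_mul]
        ring
      refine Or.inr ⟨w, (forall_mem_insert _ _ _).mpr ⟨?_, fun l hl => ?_⟩, hw x ▸ hzx⟩
      · simp [hw, hP, div_self hya.ne']
      · exact (hw (v l)).trans_le (hz l hl)

end DotProduct

section Gram

variable {V ι κ : Type*} [Fintype ι] [Fintype κ]

lemma exists_fin_dotProduct_eq (p : V → ι → ℝ) :
    ∃ q : V → Fin (Fintype.card ι) → ℝ, ∀ i j, q i ⬝ᵥ q j = p i ⬝ᵥ p j := by
  refine ⟨fun i => p i ∘ (Fintype.equivFin ι).symm, fun i j => ?_⟩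
  rw [dotProduct_comp_equiv_symm, Function.comp_assoc, Equiv.symm_comp_self,
    Function.comp_id]

lemma exists_fin_card_dotProduct_eq [Fintype V] (p : V → ι → ℝ) :
    ∃ q : V → Fin (Fintype.card V) → ℝ, ∀ i j, q i ⬝ᵥ q j = p i ⬝ᵥ p j := by
  classical
  obtain ⟨B, hB⟩ : ∃ B : Matrix V V ℝ, of p * (of p)ᴴ = star B * B := by
    open scoped MatrixOrder in
    exact CStarAlgebra.nonneg_iff_eq_star_mul_self.mp
      (posSemidef_self_mul_conjTranspose (of p)).nonneg
  obtain ⟨q, hq⟩ := exists_fin_dotProduct_eq Bᵀ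
  refine ⟨q, fun i j => ?_⟩
  have hij := congrFun (congrFun hB i) j
  simp only [mul_apply, of_apply, conjTranspose_apply, star_trivial] at hij
  rw [hq, dotProduct, dotProduct, hij]
  rfl

lemma exists_dotProduct_eq_midpoint (p : V → ι → ℝ) (q : V → κ → ℝ) :
    ∃ (n : ℕ) (r : V → Fin n → ℝ),
      ∀ i j, r i ⬝ᵥ r j = (p i ⬝ᵥ p j + q i ⬝ᵥ q j) / 2 := by
  have hc : √(1 / 2 : ℝ) * √(1 / 2) = 1 / 2 := Real.mul_self_sqrt (by norm_num)
  obtain ⟨r, hr⟩ := exists_fin_dotProduct_eq fun i => Sum.elim (√(1 / 2) • p i) (√(1 / 2) • q i)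
  refine ⟨_, r, fun i j => ?_⟩
  rw [hr, sumElim_dotProduct_sumElim, smul_dotProduct, dotProduct_smul, smul_dotProduct,
    dotProduct_smul, smul_smul, smul_smul, hc]
  simp only [smul_eq_mul]
  ring

end Gram

namespace IsVecColoring

variable {V : Type*} [Fintype V] {G : SimpleGraph V} {t : ℝ} {d : ℕ} {p : V → Fin d → ℝ}

lemma of_dotProduct_eq {e : ℕ} {q : V → Fin e → ℝ} (hp : IsVecColoring G t p)
    (hq : ∀ i j, q i ⬝ᵥ q j = p i ⬝ᵥ p j) : IsVecColoring G t q := by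
  simpa only [IsVecColoring, hq] using hp

lemma exists_fin_card (hp : IsVecColoring G t p) :
    ∃ q : V → Fin (Fintype.card V) → ℝ, IsVecColoring G t q :=
  (exists_fin_card_dotProduct_eq p).imp fun _ hq => hp.of_dotProduct_eq hq

lemma exists_midpoint {e : ℕ} {q : V → Fin e → ℝ} (hp : IsVecColoring G t p)
    (hq : IsVecColoring G t q) :
    ∃ (n : ℕ) (r : V → Fin n → ℝ), IsVecColoring G t r ∧
      ∀ i j, r i ⬝ᵥ r j = (p i ⬝ᵥ p j + q i ⬝ᵥ q j) / 2 := by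
  obtain ⟨n, r, hr⟩ := exists_dotProduct_eq_midpoint p q
  refine ⟨n, r, ⟨fun i => ?_, fun i j hij => ?_⟩, hr⟩
  · rw [hr, hp.1, hq.1]; ring
  · rw [hr]; linarith [hp.2 i j hij, hq.2 i j hij]

lemma one_lt {a b : V} (hp : IsVecColoring G t p) (hab : G.Adj a b) : 1 < t := by
  by_contra! ht
  have hpa : p a = 0 :=
    dotProduct_self_eq_zero.mp (le_antisymm (by linarith [hp.1 a]) (dotProduct_self_nonneg _))
  linarith [hp.2 a b hab, show p a ⬝ᵥ p b = 0 by simp [hpa]]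

lemma update [DecidableEq V] (hp : IsVecColoring G t p) {i : V} {w : Fin d → ℝ}
    (hw : w ⬝ᵥ w = t - 1) (hwl : ∀ l, G.Adj i l → w ⬝ᵥ p l ≤ -1) :
    IsVecColoring G t (Function.update p i w) := by
  refine ⟨fun l => ?_, fun u v huv => ?_⟩
  · rcases eq_or_ne l i with rfl | hl
    · simpa using hw
    · simpa [hl] using hp.1 l
  · rcases eq_or_ne u i with rfl | hu <;> rcases eq_or_ne v u with rfl | hv
    · exact absurd huv (G.loopless.irrefl _)
    · simpa [hv] using hwl v huv
    · exact absurd huv (G.loopless.irrefl _)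
    · rcases eq_or_ne v i with rfl | hvi
      · simpa [hu, dotProduct_comm] using hwl u huv.symm
      · simpa [hu, hvi] using hp.2 u v huv

lemma exists_forall_adj_lt_of_dotProduct_self_lt (hp : IsVecColoring G t p) {i : V}
    {u : Fin d → ℝ} (hu : 0 < u ⬝ᵥ u) (hut : u ⬝ᵥ u < t - 1)
    (hul : ∀ l, G.Adj i l → u ⬝ᵥ p l ≤ -1) :
    ∃ q : V → Fin d → ℝ, IsVecColoring G t q ∧ ∀ l, G.Adj i l → q i ⬝ᵥ q l < -1 := by
  classical
  set c := √((t - 1) / u ⬝ᵥ u)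
  have hc : c * c = (t - 1) / u ⬝ᵥ u := Real.mul_self_sqrt (div_nonneg (by linarith) hu.le)
  have hc1 : 1 < c := by
    rw [Real.lt_sqrt zero_le_one, one_pow, one_lt_div hu]
    exact hut
  have hcu : ∀ l, G.Adj i l → (c • u) ⬝ᵥ p l < -1 := fun l hl => by
    rw [smul_dotProduct, smul_eq_mul]
    nlinarith [hul l hl]
  refine ⟨Function.update p i (c • u), hp.update ?_ fun l hl => (hcu l hl).le, fun l hl => ?_⟩
  · rw [smul_dotProduct, dotProduct_smul, smul_eq_mul, smul_eq_mul, ← mul_assoc, hc,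
      div_mul_cancel₀ _ hu.ne']
  · simpa [(G.ne_of_adj hl).symm] using hcu l hl

lemma exists_forall_adj_lt_of_not_neighborlyIn (hp : IsVecColoring G t p) {i : V}
    (hi : ¬NeighborlyIn G p i) :
    ∃ q : V → Fin d → ℝ, IsVecColoring G t q ∧ ∀ l, G.Adj i l → q i ⬝ᵥ q l < -1 := by
  classical
  obtain ⟨y, hy, hyi⟩ : ∃ y : Fin d → ℝ,
      (∀ l, G.Adj i l → p i ⬝ᵥ p l = -1 → y ⬝ᵥ p l ≤ 0) ∧ y ⬝ᵥ p i < 0 := by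
    rcases farkas_dotProduct {l | G.Adj i l ∧ p i ⬝ᵥ p l = -1} p (-p i) with
      ⟨c, hc0, hcs, hc⟩ | ⟨y, hy, hyi⟩
    · exact (hi ⟨c, hc0, fun l hl => (mem_filter.mp (hcs l hl)).2, hc⟩).elim
    · exact ⟨y, fun l hl ht => hy l (by simp [hl, ht]), by simpa using hyi⟩
  have ht : 0 < t - 1 := hp.1 i ▸ dotProduct_self_pos fun h => by simp [h] at hyi
  set u : ℝ → Fin d → ℝ := fun ε => p i + ε • y
  have hul : ∀ ε l, u ε ⬝ᵥ p l = p i ⬝ᵥ p l + ε * (y ⬝ᵥ p l) := fun ε l => by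
    simp [u, add_dotProduct, smul_dotProduct]
  have huu : ∀ ε, u ε ⬝ᵥ u ε = t - 1 + ε * (2 * (y ⬝ᵥ p i) + ε * (y ⬝ᵥ y)) := fun ε => by
    simp only [u, add_dotProduct, dotProduct_add, smul_dotProduct, dotProduct_smul,
      smul_eq_mul, hp.1 i, dotProduct_comm (p i) y]
    ring
  have hlim : ∀ g : ℝ → ℝ, Continuous g → Tendsto g (𝓝[>] 0) (𝓝 (g 0)) :=
    fun g hg => (hg.tendsto 0).mono_left nhdsWithin_le_nhds
  have hpos : ∀ᶠ ε in 𝓝[>] (0 : ℝ), 0 < u ε ⬝ᵥ u ε :=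
    (hlim _ (by fun_prop)).eventually_const_lt (by simpa [u, hp.1 i] using ht)
  have hshort : ∀ᶠ ε in 𝓝[>] (0 : ℝ), u ε ⬝ᵥ u ε < t - 1 := by
    filter_upwards [self_mem_nhdsWithin,
      (hlim (fun ε => 2 * (y ⬝ᵥ p i) + ε * (y ⬝ᵥ y)) (by fun_prop)).eventually_lt_const
        (by linarith : 2 * (y ⬝ᵥ p i) + 0 * (y ⬝ᵥ y) < 0)] with ε (hε : 0 < ε) hneg
    nlinarith [huu ε]
  have hadj : ∀ l, ∀ᶠ ε in 𝓝[>] (0 : ℝ), G.Adj i l → u ε ⬝ᵥ p l ≤ -1 := fun l => by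
    by_cases hl : G.Adj i l
    · rcases (hp.2 i l hl).lt_or_eq with hlt | htight
      · filter_upwards [(hlim (fun ε => u ε ⬝ᵥ p l) (by fun_prop)).eventually_lt_const
          (by simpa [u] using hlt)] with ε hε _ using hε.le
      · filter_upwards [self_mem_nhdsWithin] with ε (hε : 0 < ε) _
        nlinarith [hul ε l, hy l hl htight]
    · exact Eventually.of_forall fun _ h => absurd h hl
  obtain ⟨ε, hε0, hεt, hεl⟩ := (hpos.and (hshort.and (eventually_all.mpr hadj))).exists
  exact hp.exists_forall_adj_lt_of_dotProduct_self_lt hε0 hεt hεl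

end IsVecColoring

section Optimal

variable {V : Type*} [Fintype V] (G : SimpleGraph V)

lemma exists_isVecColoring [Nonempty V] :
    ∃ t, 1 ≤ t ∧ ∃ (d : ℕ) (p : V → Fin d → ℝ), IsVecColoring G t p := by
  classical
  set n : ℝ := (Fintype.card V : ℝ)
  have hn : 1 ≤ n := Nat.one_le_cast.mpr Fintype.card_pos
  obtain ⟨p, hp⟩ := exists_fin_dotProduct_eq fun v : V => (n + 1) • Pi.single v (1 : ℝ) - 1
  have hdot : ∀ v w, p v ⬝ᵥ p w = (n + 1) ^ 2 * (if v = w then 1 else 0) - n - 2 := by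
    intro v w
    rw [hp]
    simp only [sub_dotProduct, dotProduct_sub, smul_dotProduct, dotProduct_smul, single_dotProduct,
      dotProduct_single, one_dotProduct_one, Pi.sub_apply, Pi.smul_apply, Pi.one_apply,
      smul_eq_mul]
    rcases eq_or_ne v w with rfl | h
    · simp only [Pi.single_eq_same, if_true, n]; ring
    · simp only [Pi.single_eq_of_ne h.symm, if_neg h, n]; ring
  refine ⟨n ^ 2 + n, by nlinarith, _, p, fun v => ?_, fun v w hvw => ?_⟩
  · rw [hdot, if_pos rfl]; ring
  · rw [hdot, if_neg hvw.ne]; linarith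

lemma isCompact_setOf_isVecColoring (n : ℕ) (T : ℝ) :
    IsCompact {x : ℝ × (V → Fin n → ℝ) | 1 ≤ x.1 ∧ x.1 ≤ T ∧ IsVecColoring G x.1 x.2} := by
  have hbox : IsCompact (Set.Icc 1 T ×ˢ Set.univ.pi fun _ : V => Set.univ.pi fun _ : Fin n =>
      Set.Icc (-T) T) :=
    isCompact_Icc.prod (isCompact_univ_pi fun _ => isCompact_univ_pi fun _ => isCompact_Icc)
  refine hbox.of_isClosed_subset ?_ ?_
  · simp only [IsVecColoring, Set.ofPred_and, Set.ofPred_forall]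
    refine (isClosed_le continuous_const continuous_fst).inter
      ((isClosed_le continuous_fst continuous_const).inter
        ((isClosed_iInter fun i => isClosed_eq (by fun_prop) (by fun_prop)).inter
          (isClosed_iInter fun i => isClosed_iInter fun j => isClosed_iInter fun _ =>
            isClosed_le (by fun_prop) (by fun_prop))))
  · rintro ⟨t, q⟩ ⟨ht1, htT, hq⟩
    refine ⟨⟨ht1, htT⟩, fun i _ k _ => abs_le.mp (abs_le_of_sq_le_sq ?_ (by linarith))⟩
    nlinarith [sq_le_dotProduct_self (q i) k, hq.1 i]

theorem exists_isVecColoring_vecChrom [Nonempty V] :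
    ∃ (d : ℕ) (p : V → Fin d → ℝ), IsVecColoring G (vecChrom G) p := by
  obtain ⟨T, hT, d₀, p₀, hp₀⟩ := exists_isVecColoring G
  obtain ⟨q₀, hq₀⟩ := hp₀.exists_fin_card
  obtain ⟨x, ⟨hx1, hxT, hx⟩, hmin⟩ := (isCompact_setOf_isVecColoring G _ T).exists_isMinOn
    ⟨(T, q₀), hT, le_rfl, hq₀⟩ continuous_fst.continuousOn
  suffices vecChrom G = x.1 from ⟨_, x.2, this ▸ hx⟩
  refine le_antisymm (csInf_le ⟨1, fun t ht => ht.1⟩ ⟨hx1, _, x.2, hx⟩)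
    (le_csInf ⟨T, hT, d₀, p₀, hp₀⟩ ?_)
  rintro t ⟨ht1, d, p, hp⟩
  obtain ⟨q, hq⟩ := hp.exists_fin_card
  rcases le_total t T with htT | hTt
  · exact hmin (show (t, q) ∈ _ from ⟨ht1, htT, hq⟩)
  · exact hxT.trans hTt

lemma exists_isVecColoring_forall_mem_lt {t : ℝ}
    (h₀ : ∃ (d : ℕ) (p : V → Fin d → ℝ), IsVecColoring G t p) (S : Finset (V × V))
    (hS : ∀ e ∈ S, G.Adj e.1 e.2 ∧
      ∃ (d : ℕ) (p : V → Fin d → ℝ), IsVecColoring G t p ∧ p e.1 ⬝ᵥ p e.2 < -1) :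
    ∃ (d : ℕ) (p : V → Fin d → ℝ), IsVecColoring G t p ∧ ∀ e ∈ S, p e.1 ⬝ᵥ p e.2 < -1 := by
  classical
  induction S using Finset.induction with
  | empty => simpa using h₀
  | @insert e S _ ih =>
    rw [forall_mem_insert] at hS
    obtain ⟨d, p, hp, hpS⟩ := ih hS.2
    obtain ⟨he, _, q, hq, hqe⟩ := hS.1
    obtain ⟨n, r, hr, hrpq⟩ := hp.exists_midpoint hq
    refine ⟨n, r, hr, (forall_mem_insert _ _ _).mpr ⟨?_, fun f hf => ?_⟩⟩
    · linarith [hrpq e.1 e.2, hp.2 _ _ he]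
    · linarith [hrpq f.1 f.2, hpS f hf, hq.2 _ _ (hS.2 f hf).1]

theorem exists_isVecColoring_vecChrom_tightSub_eq_skeleton [Nonempty V] :
    ∃ (d : ℕ) (p : V → Fin d → ℝ), IsVecColoring G (vecChrom G) p ∧
      tightSub G p = skeleton G := by
  classical
  obtain ⟨d, p, hp, hslack⟩ := exists_isVecColoring_forall_mem_lt G
    (exists_isVecColoring_vecChrom G) {e | G.Adj e.1 e.2 ∧ ¬(skeleton G).Adj e.1 e.2}
    fun e he => by
      obtain ⟨hadj, hsk⟩ := (mem_filter.mp he).2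
      simp only [skeleton, hadj, true_and, not_forall] at hsk
      obtain ⟨d, q, hq, hne⟩ := hsk
      exact ⟨hadj, d, q, hq, (hq.2 _ _ hadj).lt_of_ne hne⟩
  refine ⟨d, p, hp, SimpleGraph.ext (funext₂ fun u v => propext ⟨fun ⟨huv, htight⟩ => ?_,
    fun h => ⟨h.1, h.2 d p hp⟩⟩)⟩
  by_contra hsk
  exact (hslack (u, v) (by simp [huv, hsk])).ne htight

end Optimal

/-- In a graph with at least one edge, a vertex is neighborly iff it is
not isolated in the skeleton. -/
theorem neighborly_iff_not_isolated {V : Type*} [Fintype V] (G : SimpleGraph V)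
    (hedge : ∃ a b, G.Adj a b) (i : V) :
    Neighborly G i ↔ ∃ j, (skeleton G).Adj i j := by
  obtain ⟨a, b, hab⟩ := hedge
  have : Nonempty V := ⟨a⟩
  constructor
  · intro hi
    obtain ⟨d, p, hp, hsk⟩ := exists_isVecColoring_vecChrom_tightSub_eq_skeleton G
    obtain ⟨c, -, hc, hsum⟩ := hi d p hp
    obtain ⟨j, hj⟩ : ∃ j, c j ≠ 0 := by
      by_contra! hc0
      have hpi : p i = 0 := by simpa [hc0] using hsum
      linarith [hp.1 i, hp.one_lt hab, show p i ⬝ᵥ p i = 0 by simp [hpi]]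
    exact ⟨j, hsk ▸ hc j hj⟩
  · rintro ⟨j, hj⟩ d p hp
    by_contra hi
    obtain ⟨q, hq, hlt⟩ := hp.exists_forall_adj_lt_of_not_neighborlyIn hi
    exact (hlt j hj.1).ne (hj.2 d q hq)
end
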